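/- arXiv:1607.03224 — 4 statements merged into one kernel-verified Lean document; each statement's English description precedes it below -/
import Mathlib

section
/- Let H : Fin N → Fin N be a forest parent function and i : Fin N. Define the splayed function H' = Function.update H i (root H i). Then (1) H' is again a forest parent function, (2) root H' j = root H j for every j : Fin N, and (3) H' (H' i) = H' i, i.e., after the splay the root of i is reached from i in at most one step. -/
/-- `H` is a forest parent function: there is a rank function `r` that strictly
decreases when passing from a non-root node to its parent. -/
def IsForest {N : ℕ} (H : Fin N → Fin N) : Prop :=
  ∃ r : Fin N → ℕ, ∀ i, H i ≠ i → r (H i) < r i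

/-- The root of `i` in the forest `H`: the fixed point of `H` reached by
iterating `H` starting from `i` (for a forest parent function on `Fin N`,
`N` iterations always suffice to reach the fixed point). -/
def root {N : ℕ} (H : Fin N → Fin N) (i : Fin N) : Fin N :=
  H^[N] i

lemma rank_iter_le {N : ℕ} {f : Fin N → Fin N} {r : Fin N → ℕ}
    (hr : ∀ i, f i ≠ i → r (f i) < r i) (x : Fin N) (k : ℕ) :
    r (f^[k] x) ≤ r x := by
  induction k with
  | zero => simp
  | succ k ih =>
    rw [Function.iterate_succ_apply']
    by_cases h : f (f^[k] x) = f^[k] x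
    · rw [h]; exact ih
    · exact le_trans (le_of_lt (hr _ h)) ih

lemma root_fixed {N : ℕ} {f : Fin N → Fin N} (hf : IsForest f) (j : Fin N) :
    f (root f j) = root f j := by
  obtain ⟨r, hr⟩ := hf
  by_cases h : ∃ k, k ≤ N ∧ f (f^[k] j) = f^[k] j
  · obtain ⟨k, hk, hfix⟩ := h
    have hroot : root f j = f^[k] j := by
      have h2 := Function.iterate_add_apply f (N - k) k j
      rw [Function.iterate_fixed hfix] at h2
      have e : N - k + k = N := by omega
      rw [e] at h2
      exact h2
    rw [hroot]; exact hfix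
  · push_neg at h
    exfalso
    have step : ∀ k, k ≤ N → r (f^[k+1] j) < r (f^[k] j) := by
      intro k hk
      rw [Function.iterate_succ_apply']
      exact hr _ (h k hk)
    have mono : ∀ k, ∀ m, m ≤ k → k ≤ N → r (f^[k] j) + (k - m) ≤ r (f^[m] j) := by
      intro k
      induction k with
      | zero =>
        intro m hmk _
        have : m = 0 := by omega
        subst this; simp
      | succ k ih =>
        intro m hmk hkN
        rcases Nat.eq_or_lt_of_le hmk with rfl | hlt
        · simp
        · have h1 := ih m (by omega) (by omega)
          have h2 := step k (by omega)
          omega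
    have hinj : Function.Injective (fun k : Fin (N+1) => f^[k.1] j) := by
      intro a b hab
      by_contra hne
      rcases lt_or_gt_of_ne (fun h' : a.1 = b.1 => hne (Fin.ext h')) with hlt | hlt
      · have := mono b.1 a.1 (le_of_lt hlt) (by omega)
        simp only at hab
        rw [hab] at this
        omega
      · have := mono a.1 b.1 (le_of_lt hlt) (by omega)
        simp only at hab
        rw [hab] at this
        omega
    have := Fintype.card_le_of_injective _ hinj
    simp at this

lemma root_apply {N : ℕ} {f : Fin N → Fin N} (hf : IsForest f) (j : Fin N) :
    root f (f j) = root f j := by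
  have h : root f (f j) = f (root f j) := by
    unfold root
    rw [← Function.iterate_succ_apply, Function.iterate_succ_apply']
  rw [h, root_fixed hf]

/-- Splaying: replacing the parent of `i` by `root H i` yields again a forest
parent function, does not change any root, and afterwards the root of `i` is
reached from `i` in at most one step. -/
theorem splay_correct {N : ℕ} (H : Fin N → Fin N) (hH : IsForest H)
    (i : Fin N) :
    IsForest (Function.update H i (root H i)) ∧
      (∀ j : Fin N, root (Function.update H i (root H i)) j = root H j) ∧
      Function.update H i (root H i) (Function.update H i (root H i) i) =
        Function.update H i (root H i) i := by
  obtain ⟨r, hr⟩ := hH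
  have hHf : IsForest H := ⟨r, hr⟩
  set ρ := root H i with hρ
  set H' := Function.update H i ρ with hH'def
  have hρfix : H ρ = ρ := root_fixed hHf i
  have h1 : H' i = ρ := Function.update_self _ _ _
  have hforest : IsForest H' := by
    refine ⟨r, fun j hj => ?_⟩
    by_cases hji : j = i
    · subst hji
      rw [h1] at hj ⊢
      have hHj : H j ≠ j := by
        intro h
        exact hj (Function.iterate_fixed h N)
      have h2 : ρ = root H (H j) := (root_apply hHf j).symm
      have h3 : r ρ ≤ r (H j) := by
        rw [h2]; exact rank_iter_le hr (H j) N
      exact lt_of_le_of_lt h3 (hr j hHj)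
    · have he : H' j = H j := Function.update_of_ne hji _ _
      rw [he] at hj ⊢
      exact hr j hj
  have hfix' : H' ρ = ρ := by
    by_cases h : ρ = i
    · rw [h, h1, ← h]
    · rw [hH'def, Function.update_of_ne h, hρfix]
  have hrooti : root H' i = ρ := by
    have hNpos : 0 < N := i.pos
    have key : ∀ m, H'^[m+1] i = ρ := by
      intro m
      rw [Function.iterate_succ_apply, h1, Function.iterate_fixed hfix']
    have e : N - 1 + 1 = N := by omega
    have := key (N - 1)
    rw [e] at this
    exact this
  refine ⟨hforest, ?_, ?_⟩
  · have key : ∀ n, ∀ j : Fin N, r j = n → root H' j = root H j := by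
      intro n
      induction n using Nat.strong_induction_on with
      | _ n ih =>
        intro j hjn
        by_cases hji : j = i
        · subst hji; rw [hrooti]
        · by_cases hfixj : H j = j
          · have ha : root H j = j := Function.iterate_fixed hfixj N
            have hb : H' j = j := by
              rw [hH'def, Function.update_of_ne hji, hfixj]
            have hc : root H' j = j := Function.iterate_fixed hb N
            rw [ha, hc]
          · have hstep : H' j = H j := Function.update_of_ne hji _ _
            have ha : root H' j = root H' (H j) := by
              rw [← hstep]; exact (root_apply hforest j).symm
            have hb : root H (H j) = root H j := root_apply hHf j
            have hc := ih (r (H j)) (by rw [← hjn]; exact hr j hfixj) (H j) rfl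
            rw [ha, hc, hb]
    exact fun j => key (r j) j rfl
  · show H' (H' i) = H' i
    rw [h1, hfix']
end

section
/- Let H : Fin N → Fin N be a forest parent function and let H' : Fin N → Fin N be any function such that for every j, H' j = H j or H' j = root H j. Then H' is a forest parent function and root H' j = root H j for every j. (This covers both the splay operation and the safe-guard/path-compression operation, which reattach one or all nodes on a root-finding path directly to the root, without changing the partition into proto-features.) -/
lemma rank_iterate {N : ℕ} (H : Fin N → Fin N) (r : Fin N → ℕ)
    (hr : ∀ i, H i ≠ i → r (H i) < r i) (j : Fin N) :
    ∀ n, r (H^[n] j) ≤ r j ∧ (H^[n] j ≠ j → r (H^[n] j) < r j) := by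
  intro n
  induction n with
  | zero => simp
  | succ n ih =>
    rw [Function.iterate_succ_apply']
    by_cases h : H (H^[n] j) = H^[n] j
    · rw [h]; exact ih
    · have := lt_of_lt_of_le (hr _ h) ih.1
      exact ⟨this.le, fun _ => this⟩

lemma root_fixed_s2 {N : ℕ} (H : Fin N → Fin N) (hH : IsForest H) (i : Fin N) :
    H (root H i) = root H i := by
  obtain ⟨r, hr⟩ := hH
  by_cases hex : ∃ k, k < N ∧ H (H^[k] i) = H^[k] i
  · obtain ⟨k, hk, hfix⟩ := hex
    have : H^[N] i = H^[k] i := by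
      have hN : N - k + k = N := by omega
      calc H^[N] i = H^[N-k+k] i := by rw [hN]
        _ = H^[N-k] (H^[k] i) := Function.iterate_add_apply H (N-k) k i
        _ = H^[k] i := Function.iterate_fixed hfix (N-k)
    rw [root, this, hfix]
  · push_neg at hex
    -- strict decrease along all of 0..N, contradiction with card
    have hdec : ∀ a b : ℕ, a < b → b ≤ N → r (H^[b] i) < r (H^[a] i) := by
      intro a b hab hbN
      induction b with
      | zero => omega
      | succ b ihb =>
        rw [Function.iterate_succ_apply']
        have hb : r (H (H^[b] i)) < r (H^[b] i) := hr _ (hex b (by omega))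
        rcases Nat.lt_or_ge a b with h | h
        · exact hb.trans (ihb h (by omega))
        · have : a = b := by omega
          rw [this]; exact hb
    have inj : Function.Injective (fun k : Fin (N+1) => H^[(k : ℕ)] i) := by
      intro a b hab
      by_contra hne
      rcases Nat.lt_or_ge (a : ℕ) b with h | h
      · exact absurd (congrArg r hab) (Nat.ne_of_gt (hdec a b h (Nat.lt_succ_iff.mp b.2)))
      · have h' : (b : ℕ) < a := by
          rcases Nat.lt_or_ge (b : ℕ) a with h2 | h2
          · exact h2
          · exact absurd (Fin.ext (by omega)) hne
        exact absurd (congrArg r hab.symm) (Nat.ne_of_gt (hdec b a h' (Nat.lt_succ_iff.mp a.2)))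
    have := Fintype.card_le_of_injective _ inj
    simp at this

lemma root_H {N : ℕ} (H : Fin N → Fin N) (hH : IsForest H) (i : Fin N) :
    root H (H i) = root H i := by
  have : H^[N] (H i) = H (H^[N] i) := by
    rw [← Function.iterate_succ_apply, Function.iterate_succ_apply']
  rw [root, this]
  exact root_fixed_s2 H hH i

lemma root_root {N : ℕ} (H : Fin N → Fin N) (hH : IsForest H) (i : Fin N) :
    root H (root H i) = root H i :=
  Function.iterate_fixed (root_fixed_s2 H hH i) N

/-- Any modification of a forest parent function `H` that replaces some
parent pointers by the corresponding roots (covering both the splay and the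
safe-guard/path-compression operations) is again a forest parent function
with the same roots, i.e. the same partition into proto-features. -/
theorem compress_correct {N : ℕ} (H : Fin N → Fin N) (hH : IsForest H)
    (H' : Fin N → Fin N) (hH' : ∀ j : Fin N, H' j = H j ∨ H' j = root H j) :
    IsForest H' ∧ ∀ j : Fin N, root H' j = root H j := by
  obtain ⟨r, hr⟩ := hH
  have hH2 : IsForest H := ⟨r, hr⟩
  have hr' : ∀ j, H' j ≠ j → r (H' j) < r j := by
    intro j hj
    rcases hH' j with h | h
    · rw [h]; exact hr j (h ▸ hj)
    · rw [h]; exact (rank_iterate H r hr j N).2 (fun he => hj (h.trans he))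
  have hF' : IsForest H' := ⟨r, hr'⟩
  refine ⟨hF', ?_⟩
  have key : ∀ n, ∀ j : Fin N, r j < n → root H' j = root H j := by
    intro n
    induction n with
    | zero => intro j hj; omega
    | succ n ih =>
      intro j hj
      by_cases hfix : H' j = j
      · have h1 : root H' j = j := Function.iterate_fixed hfix N
        rcases hH' j with h | h
        · have : H j = j := h ▸ hfix
          have : root H j = j := Function.iterate_fixed this N
          rw [h1, this]
        · rw [h1, ← hfix, h, root_root H hH2]
      · have hlt : r (H' j) < n := lt_of_lt_of_le (hr' j hfix) (by omega)
        have step : root H' j = root H' (H' j) := (root_H H' hF' j).symm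
        rw [step, ih _ hlt]
        rcases hH' j with h | h
        · rw [h, root_H H hH2]
        · rw [h, root_root H hH2]
  intro j
  exact key (r j + 1) j (by omega)
end

section
/- (Soundness invariant.) Let L be a list of pairs of elements of Fin N, and let H_final be the forest parent function obtained by starting from the identity function H₀ = id and, for each pair (i, j) in L in order, performing the merge operation (setting the parent of the current root of i to the current root of j when these roots differ). Then for all a b : Fin N, if root H_final a = root H_final b then (a, b) lies in the equivalence relation generated (Relation.EqvGen) by the relation {(i, j) : (i, j) ∈ L}; i.e., every proto-feature produced by the algorithm is connected by a path of visited pairs. -/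
/-- The merge operation for a visited pair `(i, j)`: set the parent of
`root H i` to `root H j` when the two roots differ, do nothing otherwise. -/
def mergeStep {N : ℕ} (H : Fin N → Fin N) (p : Fin N × Fin N) :
    Fin N → Fin N :=
  if root H p.1 = root H p.2 then H
  else Function.update H (root H p.1) (root H p.2)

/-- The friends-of-friends union-find state obtained by starting from the
identity parent function and folding the merge operation over the list of
visited pairs `L`. -/
def runFOF {N : ℕ} (L : List (Fin N × Fin N)) : Fin N → Fin N :=
  L.foldl mergeStep id

open Relation

theorem eqvGen_iterate {α : Type*} {R : α → α → Prop} {H : α → α}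
    (hH : ∀ a, EqvGen R a (H a)) (n : ℕ) (a : α) : EqvGen R a (H^[n] a) := by
  induction n generalizing a with
  | zero => exact EqvGen.refl a
  | succ n ih =>
    rw [Function.iterate_succ_apply]
    exact (hH a).trans _ _ _ (ih (H a))

section Merge

variable {N : ℕ} {R : Fin N → Fin N → Prop}

theorem eqvGen_root {H : Fin N → Fin N} (hH : ∀ a, EqvGen R a (H a)) (a : Fin N) :
    EqvGen R a (root H a) :=
  eqvGen_iterate hH N a

/-- Merging along a pair of `R` only ever links a root to a root of an `R`-related point, so
every point stays `EqvGen R`-related to its parent. -/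
theorem eqvGen_mergeStep {H : Fin N → Fin N} (hH : ∀ a, EqvGen R a (H a))
    {p : Fin N × Fin N} (hp : R p.1 p.2) (a : Fin N) : EqvGen R a (mergeStep H p a) := by
  unfold mergeStep
  split
  · exact hH a
  · rcases eq_or_ne a (root H p.1) with rfl | ha
    · rw [Function.update_self]
      have h1 : EqvGen R p.1 (root H p.1) := eqvGen_root hH p.1
      have h2 : EqvGen R p.2 (root H p.2) := eqvGen_root hH p.2
      exact ((h1.symm _ _).trans _ _ _ (EqvGen.rel _ _ hp)).trans _ _ _ h2
    · rw [Function.update_of_ne ha]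
      exact hH a

theorem eqvGen_foldl_mergeStep (L : List (Fin N × Fin N)) (hL : ∀ p ∈ L, R p.1 p.2)
    {H : Fin N → Fin N} (hH : ∀ a, EqvGen R a (H a)) (a : Fin N) :
    EqvGen R a (L.foldl mergeStep H a) := by
  induction L generalizing H with
  | nil => exact hH a
  | cons p L ih =>
    exact ih (fun q hq => hL q (List.mem_cons_of_mem _ hq))
      (eqvGen_mergeStep hH (hL p List.mem_cons_self))

end Merge

/-- Soundness invariant: any two points assigned the same root by the
algorithm are related by the equivalence relation generated by the visited
pairs, i.e. every proto-feature produced by the algorithm is connected by a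
path of visited pairs. -/
theorem fof_sound {N : ℕ} (L : List (Fin N × Fin N)) (a b : Fin N)
    (h : root (runFOF L) a = root (runFOF L) b) :
    Relation.EqvGen (fun i j : Fin N => (i, j) ∈ L) a b := by
  have hparent : ∀ c, EqvGen (fun i j : Fin N => (i, j) ∈ L) c (runFOF L c) :=
    eqvGen_foldl_mergeStep L (fun _ hp => hp) EqvGen.refl
  have ha := eqvGen_root hparent a
  have hb := eqvGen_root hparent b
  rw [h] at ha
  exact ha.trans _ _ _ (hb.symm _ _)
end

section
/- (Self-connected node merging, Theorem 1, abstract form.) Let α be a type, let s be an equivalence relation (Setoid) on α, and let A B ⊆ α be sets each contained in a single equivalence class of s (i.e., all elements of A are pairwise s-equivalent, and all elements of B are pairwise s-equivalent). Let R ⊆ A × B be a nonempty set of pairs and let (u₀, v₀) ∈ R. Then the equivalence relation generated by s together with the single pair (u₀, v₀) equals the equivalence relation generated by s together with all pairs in R. Hence, when two self-connected KD-tree nodes each lie inside a single proto-feature, merging one neighboring pair between them is equivalent to visiting and merging all neighboring pairs. -/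
/-! Each generating relation is contained in the equivalence closure of the other: the single
pair lies in `R`, and any `(a, b) ∈ R` is recovered through the chain `a ~ u₀ — v₀ ~ b`, the
outer links holding in `s` because `A` and `B` each lie in one class. -/

namespace Relation

theorem eqvGen_eq_of_le_eqvGen {α : Type*} {r r' : α → α → Prop}
    (h : r ≤ EqvGen r') (h' : r' ≤ EqvGen r) : EqvGen r = EqvGen r' :=
  le_antisymm (EqvGen.eqvGen_le h) (EqvGen.eqvGen_le h')

theorem eqvGen_setoid_or_eq_pair_of_rel {α : Type*} {s : Setoid α} {u v a b : α}
    (ha : s.r a u) (hb : s.r v b) :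
    EqvGen (fun x y => s.r x y ∨ (x, y) = (u, v)) a b :=
  .trans _ _ _ (.rel _ _ (.inl ha)) (.trans _ _ _ (.rel _ _ (.inr rfl)) (.rel _ _ (.inl hb)))

end Relation

/-- Self-connected node merging (abstract form): if `A` and `B` each lie in a
single equivalence class of the equivalence relation `s`, and `R` is a
nonempty set of pairs drawn from `A × B` containing `(u₀, v₀)`, then the
equivalence relation generated by `s` together with the single pair `(u₀, v₀)`
equals the one generated by `s` together with all pairs of `R`: merging one
neighboring pair between two self-connected nodes is equivalent to visiting
and merging all pairs. -/
theorem merge_one_pair_suffices {α : Type*} (s : Setoid α) (A B : Set α)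
    (hA : ∀ a ∈ A, ∀ a' ∈ A, s.r a a') (hB : ∀ b ∈ B, ∀ b' ∈ B, s.r b b')
    (R : Set (α × α)) (hR : ∀ p ∈ R, p.1 ∈ A ∧ p.2 ∈ B)
    (u₀ v₀ : α) (h₀ : (u₀, v₀) ∈ R) :
    ∀ x y : α,
      Relation.EqvGen (fun a b => s.r a b ∨ (a, b) = (u₀, v₀)) x y ↔
        Relation.EqvGen (fun a b => s.r a b ∨ (a, b) ∈ R) x y := by
  suffices Relation.EqvGen (fun a b => s.r a b ∨ (a, b) = (u₀, v₀)) =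
      Relation.EqvGen (fun a b => s.r a b ∨ (a, b) ∈ R) by simp only [this, implies_true]
  obtain ⟨hu₀, hv₀⟩ := hR _ h₀
  apply Relation.eqvGen_eq_of_le_eqvGen
  · rintro a b (hs | hab)
    · exact .rel _ _ (.inl hs)
    · exact .rel _ _ (.inr (hab ▸ h₀))
  · rintro a b (hs | hab)
    · exact .rel _ _ (.inl hs)
    · obtain ⟨ha, hb⟩ := hR _ hab
      exact Relation.eqvGen_setoid_or_eq_pair_of_rel (hA _ ha _ hu₀) (hB _ hv₀ _ hb)
end
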